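/- Let X = Y ⊕ Z as above and let (u_n) be a bounded sequence in X. Then |u_n − u|_τ → 0 if and only if Pu_n converges weakly to Pu and Qu_n converges strongly (in norm) to Qu. -/

import Mathlib

open scoped RealInnerProductSpace
open Filter Topology

/-- If `⟪w n, e k⟫ → 0` for each `k` and `‖w n‖` is bounded, then `⟪w n, v⟫ → 0`
for every `v` in the closure of the span of the `e k`. -/
lemma weak_aux {X : Type*} [NormedAddCommGroup X] [InnerProductSpace ℝ X]
    (e : ℕ → X) (w : ℕ → X) (M : ℝ) (hM : ∀ n, ‖w n‖ ≤ M)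
    (h : ∀ k, Tendsto (fun n => ⟪w n, e k⟫) atTop (𝓝 0))
    (v : X) (hv : v ∈ (Submodule.span ℝ (Set.range e)).topologicalClosure) :
    Tendsto (fun n => ⟪w n, v⟫) atTop (𝓝 0) := by
  have hspan : ∀ s ∈ Submodule.span ℝ (Set.range e),
      Tendsto (fun n => ⟪w n, s⟫) atTop (𝓝 0) := by
    intro s hs
    induction hs using Submodule.span_induction with
    | mem x hx =>
      obtain ⟨k, rfl⟩ := hx
      exact h k
    | zero => simpa using tendsto_const_nhds
    | add x y _ _ hx hy => simpa [inner_add_right] using hx.add hy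
    | smul c x _ hx =>
      have := hx.const_mul c
      simpa [real_inner_smul_right] using this
  set M' : ℝ := max M 1 with hM'def
  have hM'pos : 0 < M' := lt_of_lt_of_le one_pos (le_max_right _ _)
  have hM' : ∀ n, ‖w n‖ ≤ M' := fun n => (hM n).trans (le_max_left _ _)
  rw [Metric.tendsto_atTop]
  intro ε hε
  have hδ : (0:ℝ) < ε / (2 * M') := by positivity
  have hv' : v ∈ closure ((Submodule.span ℝ (Set.range e) : Submodule ℝ X) : Set X) := hv
  rw [Metric.mem_closure_iff] at hv'
  obtain ⟨s, hs, hsd⟩ := hv' _ hδ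
  have hε2 : (0:ℝ) < ε / 2 := by linarith
  have := (Metric.tendsto_atTop.1 (hspan s hs)) (ε / 2) hε2
  obtain ⟨N, hN⟩ := this
  refine ⟨N, fun n hn => ?_⟩
  have h1 : |⟪w n, s⟫| < ε / 2 := by
    have := hN n hn
    simpa [Real.dist_eq] using this
  have h2 : |⟪w n, v - s⟫| ≤ ‖w n‖ * ‖v - s‖ := abs_real_inner_le_norm _ _
  have h3 : ‖w n‖ * ‖v - s‖ < ε / 2 := by
    calc ‖w n‖ * ‖v - s‖ ≤ M' * ‖v - s‖ := by
          apply mul_le_mul_of_nonneg_right (hM' n) (norm_nonneg _)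
      _ < M' * (ε / (2 * M')) := by
          apply mul_lt_mul_of_pos_left _ hM'pos
          simpa [dist_eq_norm] using hsd
      _ = ε / 2 := by field_simp
  have hsplit : ⟪w n, v⟫ = ⟪w n, s⟫ + ⟪w n, v - s⟫ := by
    rw [inner_sub_right]; ring
  rw [Real.dist_eq, sub_zero, hsplit]
  calc |⟪w n, s⟫ + ⟪w n, v - s⟫| ≤ |⟪w n, s⟫| + |⟪w n, v - s⟫| := abs_add_le _ _
    _ < ε / 2 + ε / 2 := by
        apply add_lt_add h1 (lt_of_le_of_lt h2 h3)
    _ = ε := by ring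

theorem stmt4 {X : Type*} [NormedAddCommGroup X] [InnerProductSpace ℝ X]
    [CompleteSpace X] (Y : Submodule ℝ X) [CompleteSpace Y]
    (e : ℕ → X) (he : Orthonormal ℝ e) (hrange : ∀ k, e k ∈ Y)
    (hspan : Y ≤ (Submodule.span ℝ (Set.range e)).topologicalClosure)
    (P : X → X) (hP : ∀ u, P u = (Y.orthogonalProjection u : X))
    (Q : X → X) (hQ : ∀ u, Q u = (Yᗮ.orthogonalProjection u : X))
    (tau : X → ℝ)
    (htau : ∀ u, tau u = max (∑' k : ℕ, (1 / 2 ^ (k + 1) : ℝ) * |⟪P u, e k⟫|) ‖Q u‖)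
    (u : ℕ → X) (ubar : X) (C : ℝ) (hbdd : ∀ n, ‖u n‖ ≤ C) :
    Tendsto (fun n => tau (u n - ubar)) atTop (𝓝 0) ↔
      ((∀ v : X, Tendsto (fun n => ⟪P (u n), v⟫) atTop (𝓝 ⟪P ubar, v⟫)) ∧
        Tendsto (fun n => ‖Q (u n) - Q ubar‖) atTop (𝓝 0)) := by
  -- linearity of P and Q
  have hPsub : ∀ a b : X, P (a - b) = P a - P b := by
    intro a b
    simp [hP, map_sub]
  have hQsub : ∀ a b : X, Q (a - b) = Q a - Q b := by
    intro a b
    simp [hQ, map_sub]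
  have hPnorm : ∀ x : X, ‖P x‖ ≤ ‖x‖ := by
    intro x
    rw [hP]
    have h1 : ‖Y.orthogonalProjection x‖ ≤ ‖Y.orthogonalProjection‖ * ‖x‖ :=
      (Y.orthogonalProjection).le_opNorm x
    have h2 : ‖Y.orthogonalProjection‖ * ‖x‖ ≤ 1 * ‖x‖ :=
      mul_le_mul_of_nonneg_right (Submodule.orthogonalProjectionOnto_norm_le Y) (norm_nonneg _)
    calc ‖(Y.orthogonalProjection x : X)‖ = ‖Y.orthogonalProjection x‖ := rfl
      _ ≤ 1 * ‖x‖ := h1.trans h2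
      _ = ‖x‖ := one_mul _
  have hPmem : ∀ x : X, P x ∈ Y := fun x => by rw [hP]; exact (Y.orthogonalProjection x).2
  -- bound on ‖P (u n - ubar)‖
  set M : ℝ := C + ‖ubar‖ with hMdef
  have hMb : ∀ n, ‖P (u n - ubar)‖ ≤ M := by
    intro n
    calc ‖P (u n - ubar)‖ ≤ ‖u n - ubar‖ := hPnorm _
      _ ≤ ‖u n‖ + ‖ubar‖ := norm_sub_le _ _
      _ ≤ C + ‖ubar‖ := by linarith [hbdd n]
  have habs : ∀ n k, |⟪P (u n - ubar), e k⟫| ≤ M := by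
    intro n k
    calc |⟪P (u n - ubar), e k⟫| ≤ ‖P (u n - ubar)‖ * ‖e k‖ := abs_real_inner_le_norm _ _
      _ = ‖P (u n - ubar)‖ := by rw [he.1 k, mul_one]
      _ ≤ M := hMb n
  have hMnn : 0 ≤ M := le_trans (abs_nonneg _) (habs 0 0)
  -- summable bound
  have hsummb : Summable (fun k : ℕ => (1 / 2 ^ (k + 1) : ℝ) * M) := by
    have : Summable (fun k : ℕ => ((1:ℝ) / 2) ^ (k + 1)) :=
      (summable_geometric_of_lt_one (by norm_num) (by norm_num)).comp_injective
        (add_left_injective 1)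
    simpa [div_pow, one_div, pow_succ, mul_comm] using this.mul_right M
  have hterm_bd : ∀ n k, |((1 / 2 ^ (k + 1) : ℝ) * |⟪P (u n - ubar), e k⟫|)| ≤
      (1 / 2 ^ (k + 1) : ℝ) * M := by
    intro n k
    rw [abs_mul, abs_abs, abs_of_pos (by positivity)]
    exact mul_le_mul_of_nonneg_left (habs n k) (by positivity)
  have hsumm : ∀ n, Summable (fun k : ℕ => (1 / 2 ^ (k + 1) : ℝ) * |⟪P (u n - ubar), e k⟫|) := by
    intro n
    apply Summable.of_abs
    exact hsummb.of_nonneg_of_le (fun k => abs_nonneg _) (hterm_bd n)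
  constructor
  · -- forward direction
    intro ht
    have hQconv : Tendsto (fun n => ‖Q (u n) - Q ubar‖) atTop (𝓝 0) := by
      apply squeeze_zero (fun n => norm_nonneg _) (fun n => ?_) ht
      rw [htau, ← hQsub]
      exact le_max_right _ _
    refine ⟨?_, hQconv⟩
    -- coordinatewise convergence
    have hcoord : ∀ k, Tendsto (fun n => ⟪P (u n - ubar), e k⟫) atTop (𝓝 0) := by
      intro k
      apply squeeze_zero_norm (fun n => ?_) (by simpa using ht.const_mul (2 ^ (k + 1) : ℝ))
      have hle : (1 / 2 ^ (k + 1) : ℝ) * |⟪P (u n - ubar), e k⟫| ≤ tau (u n - ubar) := by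
        rw [htau]
        refine le_trans ?_ (le_max_left _ _)
        exact Summable.le_tsum (hsumm n) k (fun j _ => mul_nonneg (by positivity) (abs_nonneg _))
      have h2 : (0:ℝ) < 2 ^ (k + 1) := by positivity
      rw [Real.norm_eq_abs]
      calc |⟪P (u n - ubar), e k⟫| =
            (2 ^ (k + 1) : ℝ) * ((1 / 2 ^ (k + 1) : ℝ) * |⟪P (u n - ubar), e k⟫|) := by
            field_simp
        _ ≤ (2 ^ (k + 1) : ℝ) * tau (u n - ubar) := by
            exact mul_le_mul_of_nonneg_left hle (le_of_lt h2)
    intro v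
    have hPv : P v ∈ (Submodule.span ℝ (Set.range e)).topologicalClosure := hspan (hPmem v)
    have hweak := weak_aux e (fun n => P (u n - ubar)) M hMb hcoord (P v) hPv
    -- ⟪P w, v⟫ = ⟪P w, P v⟫
    have hinner : ∀ x : X, ⟪P x, v⟫ = ⟪P x, P v⟫ := by
      intro x
      have hvo : v - P v ∈ Yᗮ := by
        rw [hP]; exact Submodule.sub_starProjection_mem_orthogonal (K := Y) v
      have h0 : ⟪P x, v - P v⟫ = 0 :=
        Submodule.inner_right_of_mem_orthogonal (hPmem x) hvo
      have := inner_sub_right (𝕜 := ℝ) (P x) v (P v)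
      rw [h0] at this
      linarith
    rw [← tendsto_sub_nhds_zero_iff]
    have : Tendsto (fun n => ⟪P (u n - ubar), P v⟫) atTop (𝓝 0) := hweak
    rw [show (fun n => ⟪P (u n), v⟫ - ⟪P ubar, v⟫) =
        fun n => ⟪P (u n - ubar), P v⟫ by
      funext n
      rw [hPsub, inner_sub_left, ← hinner (u n), ← hinner ubar]]
    exact this
  · -- reverse direction
    rintro ⟨hw, hq⟩
    have hQ0 : Tendsto (fun n => ‖Q (u n - ubar)‖) atTop (𝓝 0) := by
      simpa [hQsub] using hq
    have hcoord : ∀ k, Tendsto (fun n => ⟪P (u n - ubar), e k⟫) atTop (𝓝 0) := by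
      intro k
      have := (hw (e k)).sub (tendsto_const_nhds (x := ⟪P ubar, e k⟫))
      simpa [hPsub, inner_sub_left] using this
    have hsum0 : Tendsto (fun n => ∑' k : ℕ,
        (1 / 2 ^ (k + 1) : ℝ) * |⟪P (u n - ubar), e k⟫|) atTop (𝓝 0) := by
      have := tendsto_tsum_of_dominated_convergence (𝓕 := atTop)
        (f := fun n k => (1 / 2 ^ (k + 1) : ℝ) * |⟪P (u n - ubar), e k⟫|)
        (g := fun _ => (0:ℝ)) hsummb
        (fun k => by
          have := (hcoord k).abs.const_mul (1 / 2 ^ (k + 1) : ℝ)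
          simpa using this)
        (Eventually.of_forall fun n k => by
          rw [Real.norm_eq_abs]; exact hterm_bd n k)
      simpa using this
    have := hsum0.max hQ0
    rw [show (fun n => tau (u n - ubar)) = fun n =>
        max (∑' k : ℕ, (1 / 2 ^ (k + 1) : ℝ) * |⟪P (u n - ubar), e k⟫|) ‖Q (u n - ubar)‖ by
      funext n; rw [htau]]
    simpa using this
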